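/- arXiv:2509.03919 — 7 statements merged into one kernel-verified Lean document; each statement's English description precedes it below -/
import Mathlib

section
/- Let G be a finite group in which every non-identity element has prime order. Then the difference graph of G has no edges: for all x, y ∈ G, if ⟨x⟩ ∩ ⟨y⟩ ≠ {1} then x is a power of y or y is a power of x. -/
private lemma zpowers_eq_of_mem {G : Type*} [Group G] [Finite G]
    (h : ∀ g : G, g ≠ 1 → (orderOf g).Prime)
    {x z : G} (hz : z ∈ Subgroup.zpowers x) (hz1 : z ≠ 1) :
    Subgroup.zpowers z = Subgroup.zpowers x := by
  have hx1 : x ≠ 1 := by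
    rintro rfl
    rw [Subgroup.zpowers_one_eq_bot, Subgroup.mem_bot] at hz
    exact hz1 hz
  have hdvd : orderOf z ∣ orderOf x := orderOf_dvd_of_mem_zpowers hz
  have heq : orderOf z = orderOf x :=
    (Nat.prime_dvd_prime_iff_eq (h z hz1) (h x hx1)).mp hdvd
  have hle : Subgroup.zpowers z ≤ Subgroup.zpowers x := by
    rw [Subgroup.zpowers_le]; exact hz
  refine Subgroup.eq_of_le_of_card_ge hle ?_
  rw [Nat.card_zpowers, Nat.card_zpowers, heq]

theorem diff_graph_empty_of_all_prime_order {G : Type*} [Group G] [Finite G]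
    (h : ∀ g : G, g ≠ 1 → (orderOf g).Prime) :
    ∀ x y : G, Subgroup.zpowers x ⊓ Subgroup.zpowers y ≠ ⊥ →
      x ∈ Subgroup.zpowers y ∨ y ∈ Subgroup.zpowers x := by
  intro x y hne
  obtain ⟨⟨z, hzx, hzy⟩, hz1⟩ := Subgroup.ne_bot_iff_exists_ne_one.mp hne
  have hz1' : z ≠ 1 := by simpa [Subtype.ext_iff] using hz1
  have h1 := zpowers_eq_of_mem h hzx hz1'
  have h2 := zpowers_eq_of_mem h hzy hz1'
  left
  rw [← h2, h1]
  exact Subgroup.mem_zpowers x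
end

section
/- Suppose G is a finite group that either cannot be generated by two elements or has trivial center. Then the difference graph of G has no edges if and only if for every proper subgroup H of G the difference graph of H has no edges. -/
def DiffAdj {G : Type*} [Group G] (x y : G) : Prop :=
  x ≠ y ∧ x ≠ 1 ∧ y ≠ 1 ∧
    Subgroup.zpowers x ⊓ Subgroup.zpowers y ≠ ⊥ ∧
    x ∉ Subgroup.zpowers y ∧ y ∉ Subgroup.zpowers x

lemma mem_zpowers_coe_iff {G : Type*} [Group G] {H : Subgroup G} (a b : H) :
    (a : G) ∈ Subgroup.zpowers (b : G) ↔ a ∈ Subgroup.zpowers b := by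
  constructor
  · rintro ⟨k, hk⟩
    exact ⟨k, Subtype.ext (by simpa using hk)⟩
  · rintro ⟨k, hk⟩
    exact ⟨k, by simpa using congrArg (Subtype.val) hk⟩

lemma diffAdj_coe_iff {G : Type*} [Group G] {H : Subgroup G} (a b : H) :
    DiffAdj (a : G) (b : G) ↔ DiffAdj a b := by
  unfold DiffAdj
  have hne : (a : G) ≠ b ↔ a ≠ b := not_congr (by exact_mod_cast Iff.rfl)
  have h1 : (a : G) ≠ 1 ↔ a ≠ 1 := not_congr (by exact_mod_cast Iff.rfl)
  have h2 : (b : G) ≠ 1 ↔ b ≠ 1 := not_congr (by exact_mod_cast Iff.rfl)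
  have hinf : (Subgroup.zpowers (a : G) ⊓ Subgroup.zpowers (b : G) ≠ ⊥)
      ↔ (Subgroup.zpowers a ⊓ Subgroup.zpowers b ≠ ⊥) := by
    rw [not_iff_not, Subgroup.eq_bot_iff_forall, Subgroup.eq_bot_iff_forall]
    constructor
    · intro hG z hz
      rcases hz with ⟨⟨k, hk⟩, ⟨l, hl⟩⟩
      have : (z : G) = 1 := by
        refine hG z ⟨⟨k, ?_⟩, ⟨l, ?_⟩⟩
        · simpa using congrArg Subtype.val hk
        · simpa using congrArg Subtype.val hl
      exact Subtype.ext (by simpa using this)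
    · intro hH z hz
      rcases hz with ⟨⟨k, hk⟩, ⟨l, hl⟩⟩
      have hzH : z ∈ H := hk ▸ (H.zpow_mem a.2 k)
      have : (⟨z, hzH⟩ : H) = 1 := by
        refine hH _ ⟨⟨k, Subtype.ext (by simpa using hk)⟩,
          ⟨l, Subtype.ext (by simpa using hl)⟩⟩
      simpa using congrArg Subtype.val this
  rw [hne, h1, h2, hinf, mem_zpowers_coe_iff, mem_zpowers_coe_iff]

theorem diff_null_iff_subgroups_null {G : Type*} [Group G] [Finite G]
    (h : (¬ ∃ x y : G, Subgroup.closure {x, y} = ⊤) ∨ Subgroup.center G = ⊥) :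
    (∀ x y : G, ¬ DiffAdj x y) ↔
      ∀ H : Subgroup G, H ≠ ⊤ → ∀ x y : H, ¬ DiffAdj x y := by
  constructor
  · intro hG H _ x y hxy
    exact hG x y ((diffAdj_coe_iff x y).mpr hxy)
  · intro hSub x y hxy
    set K := Subgroup.closure ({x, y} : Set G) with hK
    by_cases hKtop : K = ⊤
    · rcases h with h2gen | hcen
      · exact h2gen ⟨x, y, hKtop⟩
      · -- find nontrivial element in zpowers x ⊓ zpowers y; it's central
        obtain ⟨_, _, _, hinf, _, _⟩ := hxy
        rw [Ne, Subgroup.eq_bot_iff_forall] at hinf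
        push_neg at hinf
        obtain ⟨z, hz, hz1⟩ := hinf
        obtain ⟨⟨k, hk⟩, ⟨l, hl⟩⟩ := hz
        have hzx : Commute z x := hk ▸ (Commute.refl x).zpow_left k
        have hzy : Commute z y := hl ▸ (Commute.refl y).zpow_left l
        have hzcen : z ∈ Subgroup.center G := by
          rw [Subgroup.mem_center_iff]
          intro g
          have hg : g ∈ K := hKtop ▸ Subgroup.mem_top g
          induction hg using Subgroup.closure_induction with
          | mem w hw =>
            rcases hw with hw | hw
            · subst hw; exact hzx.symm.eq
            · simp only [Set.mem_singleton_iff] at hw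
              subst hw; exact hzy.symm.eq
          | one => simp
          | mul a b _ _ ha hb =>
            calc a * b * z = a * (b * z) := by group
              _ = a * (z * b) := by rw [hb]
              _ = (a * z) * b := by group
              _ = z * a * b := by rw [ha]
              _ = z * (a * b) := by group
          | inv a _ ha =>
            have hca : Commute z a := Commute.symm ha
            exact (hca.inv_right.symm).eq
        rw [hcen] at hzcen
        exact hz1 (by simpa using hzcen)
    · have hx : x ∈ K := Subgroup.subset_closure (by simp)
      have hy : y ∈ K := Subgroup.subset_closure (by simp)
      exact hSub K hKtop ⟨x, hx⟩ ⟨y, hy⟩ ((diffAdj_coe_iff _ _).mp hxy)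
end

section
/- Let G be a finite group whose difference graph has no edges. Then the power graph of G is a cograph, i.e., it contains no induced path on 4 vertices. -/
/-- Power graph adjacency. -/
def PowAdj {G : Type*} [Group G] (x y : G) : Prop :=
  x ≠ y ∧ (x ∈ Subgroup.zpowers y ∨ y ∈ Subgroup.zpowers x)

theorem powerGraph_cograph_of_diff_null {G : Type*} [Group G] [Finite G]
    (h : ∀ x y : G, ¬ DiffAdj x y) :
    ¬ ∃ a b c d : G, a ≠ b ∧ a ≠ c ∧ a ≠ d ∧ b ≠ c ∧ b ≠ d ∧ c ≠ d ∧
      PowAdj a b ∧ PowAdj b c ∧ PowAdj c d ∧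
      ¬ PowAdj a c ∧ ¬ PowAdj a d ∧ ¬ PowAdj b d := by
  rintro ⟨a, b, c, d, hab, hac, had, hbc, hbd, hcd,
    ⟨_, pab⟩, ⟨_, pbc⟩, ⟨_, pcd⟩, nac, nad, nbd⟩
  have hb1 : b ≠ 1 := by
    rintro rfl; exact nbd ⟨hbd, Or.inl (Subgroup.one_mem _)⟩
  have hc1 : c ≠ 1 := by
    rintro rfl; exact nac ⟨hac, Or.inr (Subgroup.one_mem _)⟩
  have trans : ∀ x y w : G, x ∈ Subgroup.zpowers y → y ∈ Subgroup.zpowers w →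
      x ∈ Subgroup.zpowers w := fun x y w h1 h2 => Subgroup.zpowers_le.mpr h2 h1
  have comp : ∀ x y z : G, z ≠ 1 → x ≠ y → z ∈ Subgroup.zpowers x →
      z ∈ Subgroup.zpowers y →
      x ∈ Subgroup.zpowers y ∨ y ∈ Subgroup.zpowers x := by
    intro x y z hz hxy h1 h2
    by_contra hcon
    push_neg at hcon
    refine h x y ⟨hxy, ?_, ?_, ?_, hcon.1, hcon.2⟩
    · rintro rfl
      exact hz (by simpa [Subgroup.zpowers_one_eq_bot, Subgroup.mem_bot] using h1)
    · rintro rfl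
      exact hz (by simpa [Subgroup.zpowers_one_eq_bot, Subgroup.mem_bot] using h2)
    · intro hbot
      exact hz (Subgroup.mem_bot.mp (hbot ▸ Subgroup.mem_inf.mpr ⟨h1, h2⟩))
  rcases pbc with hbc' | hbc'
  · rcases pcd with h1 | h1
    · exact nbd ⟨hbd, Or.inl (trans b c d hbc' h1)⟩
    · rcases pab with h2 | h2
      · exact nac ⟨hac, Or.inl (trans a b c h2 hbc')⟩
      · exact nac ⟨hac, comp a c b hb1 hac h2 hbc'⟩
  · rcases pab with h2 | h2
    · rcases pcd with h1 | h1
      · exact nbd ⟨hbd, comp b d c hc1 hbd hbc' h1⟩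
      · exact nbd ⟨hbd, Or.inr (trans d c b h1 hbc')⟩
    · exact nac ⟨hac, Or.inr (trans c b a hbc' h2)⟩
end

section
/- Let n be a squarefree positive integer and let a, b be elements of the cyclic group Z_n with sets of prime divisors π(a), π(b) of their orders. Then a is a power of b or b is a power of a if and only if π(a) ⊆ π(b) or π(b) ⊆ π(a); and ⟨a⟩ ∩ ⟨b⟩ ≠ {0} if and only if π(a) ∩ π(b) ≠ ∅. Consequently, a and b are adjacent in the difference graph of Z_n if and only if π(a) ∩ π(b) ≠ ∅, π(a) ⊄ π(b), and π(b) ⊄ π(a). -/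
-- antitone of division among divisors
lemma nat_div_dvd_div {n d e : ℕ} (hde : d ∣ e) (hen : e ∣ n) : n / e ∣ n / d := by
  obtain ⟨k, rfl⟩ := hde
  have hk : k ∣ n / d := (Nat.dvd_div_iff_mul_dvd (dvd_of_mul_right_dvd hen)).mpr hen
  rw [← Nat.div_div_eq_div_mul]
  exact Nat.div_dvd_of_dvd hk

lemma nat_div_dvd_div_iff {n d e : ℕ} (hn : n ≠ 0) (hd : d ∣ n) (he : e ∣ n) :
    n / e ∣ n / d ↔ d ∣ e := by
  constructor
  · intro h
    have := nat_div_dvd_div h (Nat.div_dvd_of_dvd hd)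
    rwa [Nat.div_div_self hd hn, Nat.div_div_self he hn] at this
  · intro h; exact nat_div_dvd_div h he

lemma zmod_dvd_iff {n : ℕ} [NeZero n] (x y : ZMod n) :
    y ∣ x ↔ n.gcd y.val ∣ x.val := by
  constructor
  · rintro ⟨c, rfl⟩
    rw [ZMod.val_mul, Nat.dvd_mod_iff (Nat.gcd_dvd_left _ _)]
    exact (Nat.gcd_dvd_right _ _).mul_right _
  · intro h
    refine ⟨(Nat.gcdB n y.val : ZMod n) * (x.val / n.gcd y.val : ℕ), ?_⟩
    have key : ((n.gcd y.val : ℕ) : ZMod n) = y * (Nat.gcdB n y.val : ZMod n) := by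
      have := Nat.gcd_eq_gcd_ab n y.val
      calc ((n.gcd y.val : ℕ) : ZMod n) = (((n.gcd y.val : ℕ) : ℤ) : ZMod n) := by push_cast; ring
        _ = ((n * Nat.gcdA n y.val + y.val * Nat.gcdB n y.val : ℤ) : ZMod n) := by rw [← this]
        _ = y * (Nat.gcdB n y.val : ZMod n) := by push_cast; simp [ZMod.natCast_self, ZMod.natCast_val, ZMod.cast_id]
    calc x = ((x.val : ℕ) : ZMod n) := by simp [ZMod.natCast_val, ZMod.cast_id]
      _ = ((n.gcd y.val * (x.val / n.gcd y.val) : ℕ) : ZMod n) := by rw [Nat.mul_div_cancel' h]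
      _ = y * ((Nat.gcdB n y.val : ZMod n) * (x.val / n.gcd y.val : ℕ)) := by
        push_cast; rw [key]; ring

lemma zmod_mem_iff {n : ℕ} [NeZero n] (x y : ZMod n) :
    x ∈ AddSubgroup.zmultiples y ↔ addOrderOf x ∣ addOrderOf y := by
  have hn : n ≠ 0 := NeZero.ne n
  have hordx : addOrderOf x = n / n.gcd x.val := by
    conv_lhs => rw [show x = ((x.val : ℕ) : ZMod n) by simp [ZMod.natCast_val, ZMod.cast_id]]
    exact ZMod.addOrderOf_coe x.val hn
  have hordy : addOrderOf y = n / n.gcd y.val := by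
    conv_lhs => rw [show y = ((y.val : ℕ) : ZMod n) by simp [ZMod.natCast_val, ZMod.cast_id]]
    exact ZMod.addOrderOf_coe y.val hn
  have hdvd : x ∈ AddSubgroup.zmultiples y ↔ y ∣ x := by
    rw [AddSubgroup.mem_zmultiples_iff]
    constructor
    · rintro ⟨k, rfl⟩; exact ⟨(k : ZMod n), by rw [zsmul_eq_mul]; ring⟩
    · rintro ⟨c, rfl⟩
      obtain ⟨k, rfl⟩ := ZMod.intCast_surjective c
      exact ⟨k, by rw [zsmul_eq_mul]; ring⟩
  rw [hdvd, hordx, hordy, zmod_dvd_iff,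
    nat_div_dvd_div_iff hn (Nat.gcd_dvd_left _ _) (Nat.gcd_dvd_left _ _),
    Nat.dvd_gcd_iff]
  simp [Nat.gcd_dvd_left]

lemma sqf_dvd_iff {d m : ℕ} (hd : Squarefree d) (hm : m ≠ 0) :
    d ∣ m ↔ d.primeFactors ⊆ m.primeFactors := by
  constructor
  · exact fun h => Nat.primeFactors_mono h hm
  · intro h
    calc d = ∏ p ∈ d.primeFactors, p := (Nat.prod_primeFactors_of_squarefree hd).symm
      _ ∣ ∏ p ∈ m.primeFactors, p := Finset.prod_dvd_prod_of_subset _ _ _ h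
      _ ∣ m := Nat.prod_primeFactors_dvd m

theorem squarefree_cyclic_diff_adj_iff (n : ℕ) (hn : 0 < n)
    (hsq : Squarefree n) (a b : ZMod n) :
    ((a ∈ AddSubgroup.zmultiples b ∨ b ∈ AddSubgroup.zmultiples a) ↔
      ((addOrderOf a).primeFactors ⊆ (addOrderOf b).primeFactors ∨
        (addOrderOf b).primeFactors ⊆ (addOrderOf a).primeFactors)) ∧
    ((AddSubgroup.zmultiples a ⊓ AddSubgroup.zmultiples b ≠ ⊥) ↔
      ((addOrderOf a).primeFactors ∩ (addOrderOf b).primeFactors).Nonempty) ∧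
    ((a ≠ b ∧ a ≠ 0 ∧ b ≠ 0 ∧
        AddSubgroup.zmultiples a ⊓ AddSubgroup.zmultiples b ≠ ⊥ ∧
        a ∉ AddSubgroup.zmultiples b ∧ b ∉ AddSubgroup.zmultiples a) ↔
      (((addOrderOf a).primeFactors ∩ (addOrderOf b).primeFactors).Nonempty ∧
        ¬ (addOrderOf a).primeFactors ⊆ (addOrderOf b).primeFactors ∧
        ¬ (addOrderOf b).primeFactors ⊆ (addOrderOf a).primeFactors)) := by
  have : NeZero n := ⟨hn.ne'⟩
  have hn0 : n ≠ 0 := hn.ne'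
  have hcard : Fintype.card (ZMod n) = n := ZMod.card n
  have horda : addOrderOf a ∣ n :=
    addOrderOf_dvd_iff_nsmul_eq_zero.mpr (by simp [nsmul_eq_mul, ZMod.natCast_self])
  have hordb : addOrderOf b ∣ n :=
    addOrderOf_dvd_iff_nsmul_eq_zero.mpr (by simp [nsmul_eq_mul, ZMod.natCast_self])
  have hsa : Squarefree (addOrderOf a) := hsq.squarefree_of_dvd horda
  have hsb : Squarefree (addOrderOf b) := hsq.squarefree_of_dvd hordb
  have ha0' : addOrderOf a ≠ 0 := (addOrderOf_pos a).ne'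
  have hb0' : addOrderOf b ≠ 0 := (addOrderOf_pos b).ne'
  have h1 : (a ∈ AddSubgroup.zmultiples b ∨ b ∈ AddSubgroup.zmultiples a) ↔
      ((addOrderOf a).primeFactors ⊆ (addOrderOf b).primeFactors ∨
        (addOrderOf b).primeFactors ⊆ (addOrderOf a).primeFactors) := by
    rw [zmod_mem_iff a b, zmod_mem_iff b a, sqf_dvd_iff hsa hb0', sqf_dvd_iff hsb ha0']
  have h2 : (AddSubgroup.zmultiples a ⊓ AddSubgroup.zmultiples b ≠ ⊥) ↔
      ((addOrderOf a).primeFactors ∩ (addOrderOf b).primeFactors).Nonempty := by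
    constructor
    · intro h
      rw [Ne, AddSubgroup.eq_bot_iff_forall] at h
      push_neg at h
      obtain ⟨x, hxH, hx0⟩ := h
      rw [AddSubgroup.mem_inf] at hxH
      have hxa : addOrderOf x ∣ addOrderOf a := (zmod_mem_iff x a).mp hxH.1
      have hxb : addOrderOf x ∣ addOrderOf b := (zmod_mem_iff x b).mp hxH.2
      have hx1 : addOrderOf x ≠ 1 := fun h => hx0 (AddMonoid.addOrderOf_eq_one_iff.mp h)
      obtain ⟨p, hp, hpx⟩ := Nat.exists_prime_and_dvd hx1
      exact ⟨p, Finset.mem_inter.mpr ⟨Nat.mem_primeFactors.mpr ⟨hp, hpx.trans hxa, ha0'⟩,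
        Nat.mem_primeFactors.mpr ⟨hp, hpx.trans hxb, hb0'⟩⟩⟩
    · rintro ⟨p, hpmem⟩
      rw [Finset.mem_inter] at hpmem
      obtain ⟨hpa, hpb⟩ := hpmem
      have hp : p.Prime := (Nat.mem_primeFactors.mp hpa).1
      have hpda : p ∣ addOrderOf a := (Nat.mem_primeFactors.mp hpa).2.1
      have hpdb : p ∣ addOrderOf b := (Nat.mem_primeFactors.mp hpb).2.1
      have hpn : p ∣ n := hpda.trans horda
      set z : ZMod n := ((n / p : ℕ) : ZMod n) with hzdef
      have hgcd : n.gcd (n / p) = n / p := Nat.gcd_eq_right (Nat.div_dvd_of_dvd hpn)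
      have hz : addOrderOf z = p := by
        rw [hzdef, ZMod.addOrderOf_coe _ hn0, hgcd, Nat.div_div_self hpn hn0]
      have hz0 : z ≠ 0 := fun h => hp.one_lt.ne' (by rw [← hz, h, addOrderOf_zero])
      intro hbot
      have hzmem : z ∈ AddSubgroup.zmultiples a ⊓ AddSubgroup.zmultiples b :=
        AddSubgroup.mem_inf.mpr ⟨(zmod_mem_iff z a).mpr (hz ▸ hpda),
          (zmod_mem_iff z b).mpr (hz ▸ hpdb)⟩
      exact hz0 ((AddSubgroup.eq_bot_iff_forall _).mp hbot z hzmem)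
  refine ⟨h1, h2, ?_⟩
  constructor
  · rintro ⟨hab, ha0, hb0, hint, hnab, hnba⟩
    refine ⟨h2.mp hint, ?_, ?_⟩
    · intro hsub
      exact hnab ((zmod_mem_iff a b).mpr ((sqf_dvd_iff hsa hb0').mpr hsub))
    · intro hsub
      exact hnba ((zmod_mem_iff b a).mpr ((sqf_dvd_iff hsb ha0').mpr hsub))
  · rintro ⟨hne, hsub1, hsub2⟩
    have hab : a ≠ b := fun h => hsub1 (by rw [h])
    have ha0 : a ≠ 0 := by
      rintro rfl
      obtain ⟨p, hp⟩ := hne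
      rw [Finset.mem_inter, addOrderOf_zero, Nat.primeFactors_one] at hp
      exact absurd hp.1 (Finset.notMem_empty p)
    have hb0 : b ≠ 0 := by
      rintro rfl
      obtain ⟨p, hp⟩ := hne
      rw [Finset.mem_inter, addOrderOf_zero, Nat.primeFactors_one] at hp
      exact absurd hp.2 (Finset.notMem_empty p)
    refine ⟨hab, ha0, hb0, h2.mpr hne, ?_, ?_⟩
    · intro hmem
      exact hsub1 ((sqf_dvd_iff hsa hb0').mp ((zmod_mem_iff a b).mp hmem))
    · intro hmem
      exact hsub2 ((sqf_dvd_iff hsb ha0').mp ((zmod_mem_iff b a).mp hmem))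
end

section
/- Let G be a finite group. Then every vertex of the difference graph of G has even degree. Specifically, for any a ∈ G, the neighborhood of a in the difference graph is a disjoint union of generator-sets of cyclic subgroups ⟨x⟩ with |⟨x⟩| ≥ 3, so the degree of a is a sum of values φ(o(x)) with o(x) ≥ 3, each of which is even. -/
theorem diff_graph_degree_even {G : Type*} [Group G] [Finite G] (a : G) :
    Even (Nat.card {b : G // DiffAdj a b}) := by
  classical
  have _inst : Fintype G := Fintype.ofFinite G
  set s : Finset G := Finset.univ.filter (fun b => DiffAdj a b) with hs
  have hcard : Nat.card {b : G // DiffAdj a b} = s.card := by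
    rw [Nat.card_eq_fintype_card]
    simp [hs, Fintype.card_subtype]
  rw [hcard]
  -- show (s.card : ZMod 2) = 0 via a fixed-point-free involution b ↦ b⁻¹
  have hmem : ∀ b ∈ s, DiffAdj a b := by
    intro b hb
    simpa [hs] using hb
  have hinv : ∀ b ∈ s, b⁻¹ ∈ s := by
    intro b hb
    obtain ⟨hab, ha1, hb1, hbot, hax, hbx⟩ := hmem b hb
    simp only [hs, Finset.mem_filter, Finset.mem_univ, true_and]
    refine ⟨?_, ha1, inv_ne_one.mpr hb1, ?_, ?_, ?_⟩
    · rintro rfl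
      exact hax (by simpa using Subgroup.inv_mem _ (Subgroup.mem_zpowers b))
    · simp [Subgroup.zpowers_inv]; exact hbot
    · simpa [Subgroup.zpowers_inv] using hax
    · intro h
      exact hbx (by simpa using Subgroup.inv_mem _ h)
  have hne : ∀ b ∈ s, b⁻¹ ≠ b := by
    intro b hb heq
    obtain ⟨hab, ha1, hb1, hbot, hax, hbx⟩ := hmem b hb
    -- b has order 2, so zpowers b = {1, b}; nontrivial intersection forces b ∈ zpowers a
    have hb2 : b ^ 2 = 1 := by
      rw [sq, ← eq_inv_iff_mul_eq_one]
      exact heq.symm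
    obtain ⟨x, hx⟩ := Subgroup.bot_or_exists_ne_one _ |>.resolve_left hbot
    obtain ⟨hxmem, hx1⟩ := hx
    have hxa : x ∈ Subgroup.zpowers a := hxmem.1
    have hxb : x ∈ Subgroup.zpowers b := hxmem.2
    obtain ⟨n, rfl⟩ := hxb
    have : b ^ n = 1 ∨ b ^ n = b := by
      have h2 : b ^ (2 : ℤ) = 1 := by exact_mod_cast hb2
      have := Int.emod_emod_of_dvd n (dvd_refl 2)
      rcases Int.emod_two_eq_zero_or_one n with h | h
      · left
        obtain ⟨k, hk⟩ := Int.dvd_of_emod_eq_zero h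
        rw [hk, zpow_mul, h2, one_zpow]
      · right
        have : b ^ n = b ^ (2 * (n / 2) + n % 2) := by
          rw [Int.mul_ediv_add_emod]
        rw [this, h, zpow_add, zpow_mul, h2, one_zpow, one_mul, zpow_one]
    rcases this with h | h
    · exact hx1 h
    · exact hbx (h ▸ hxa)
  have hzero : ((s.card : ZMod 2)) = 0 := by
    have := Finset.sum_involution (s := s) (f := fun _ => (1 : ZMod 2))
      (fun b hb => b⁻¹)
      (by intro a ha; decide)
      (by intro b hb _; exact hne b hb)
      (fun b hb => hinv b hb)
      (by intro b hb; simp)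
    simpa using this
  have : (2 : ℕ) ∣ s.card := by
    rwa [← ZMod.natCast_eq_zero_iff]
  exact even_iff_two_dvd.mpr this
end

section
/- Let G be the cyclic group of order p₁^{α₁} p₂ where p₁, p₂ are distinct primes and α₁ ≥ 1. Then the difference graph of G is bipartite: partitioning the non-identity elements into V₁ = {g : o(g) is a power of p₁} and V₂ = {g : p₂ divides o(g)}, there are no difference-graph edges within V₁ and none within V₂. -/
open Subgroup

lemma mem_zpowers_of_orderOf_dvd {G : Type*} [Group G] [Fintype G] [IsCyclic G]
    {x y : G} (h : orderOf x ∣ orderOf y) : x ∈ Subgroup.zpowers y := by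
  classical
  set d := orderOf y with hd
  have hd0 : 0 < d := orderOf_pos y
  have hS : (Finset.univ.filter (fun z : G => z ^ d = 1)).card ≤ d :=
    IsCyclic.card_pow_eq_one_le hd0
  have hsub : (Subgroup.zpowers y : Set G).toFinset ⊆
      Finset.univ.filter (fun z : G => z ^ d = 1) := by
    intro z hz
    simp only [Set.mem_toFinset, SetLike.mem_coe] at hz
    obtain ⟨k, hk⟩ := hz
    simp only [Finset.mem_filter, Finset.mem_univ, true_and]
    subst hk
    rw [← zpow_natCast, ← zpow_mul, mul_comm, zpow_mul, zpow_natCast,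
      pow_orderOf_eq_one, one_zpow]
  have hcard : (Subgroup.zpowers y : Set G).toFinset.card = d := by
    rw [Set.toFinset_card]
    exact Fintype.card_zpowers
  have heq : (Subgroup.zpowers y : Set G).toFinset =
      Finset.univ.filter (fun z : G => z ^ d = 1) :=
    Finset.eq_of_subset_of_card_le hsub (by rw [hcard]; exact hS)
  have hx : x ∈ Finset.univ.filter (fun z : G => z ^ d = 1) := by
    simp only [Finset.mem_filter, Finset.mem_univ, true_and]
    exact orderOf_dvd_iff_pow_eq_one.mp h
  rw [← heq] at hx
  simpa using hx

theorem diff_graph_bipartite {G : Type*} [Group G] [Fintype G]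
    (hG : IsCyclic G) (p₁ p₂ : ℕ) (hp₁ : p₁.Prime) (hp₂ : p₂.Prime)
    (hne : p₁ ≠ p₂) (α₁ : ℕ) (hα : 1 ≤ α₁)
    (hcard : Fintype.card G = p₁ ^ α₁ * p₂) :
    (∀ x y : G, (∃ k, orderOf x = p₁ ^ k) → (∃ k, orderOf y = p₁ ^ k) →
      ¬ DiffAdj x y) ∧
    (∀ x y : G, p₂ ∣ orderOf x → p₂ ∣ orderOf y → ¬ DiffAdj x y) := by
  haveI := hG
  have key : ∀ x y : G, orderOf x ∣ orderOf y → ¬ DiffAdj x y := by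
    intro x y h hadj
    exact hadj.2.2.2.2.1 (mem_zpowers_of_orderOf_dvd h)
  have key' : ∀ x y : G, orderOf y ∣ orderOf x → ¬ DiffAdj x y := by
    intro x y h hadj
    exact hadj.2.2.2.2.2 (mem_zpowers_of_orderOf_dvd h)
  constructor
  · rintro x y ⟨k₁, hk₁⟩ ⟨k₂, hk₂⟩
    rcases le_total k₁ k₂ with h | h
    · exact key x y (by rw [hk₁, hk₂]; exact pow_dvd_pow _ h)
    · exact key' x y (by rw [hk₁, hk₂]; exact pow_dvd_pow _ h)
  · intro x y hx hy
    have hp₂0 : 0 < p₂ := hp₂.pos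
    obtain ⟨mx, hmx⟩ := hx
    obtain ⟨my, hmy⟩ := hy
    have hdx : orderOf x ∣ p₁ ^ α₁ * p₂ := hcard ▸ orderOf_dvd_card
    have hdy : orderOf y ∣ p₁ ^ α₁ * p₂ := hcard ▸ orderOf_dvd_card
    have hmx' : mx ∣ p₁ ^ α₁ := by
      have : p₂ * mx ∣ p₂ * p₁ ^ α₁ := by
        rw [← hmx]; rwa [mul_comm (p₁ ^ α₁) p₂] at hdx
      exact (mul_dvd_mul_iff_left hp₂0.ne').mp this
    have hmy' : my ∣ p₁ ^ α₁ := by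
      have : p₂ * my ∣ p₂ * p₁ ^ α₁ := by
        rw [← hmy]; rwa [mul_comm (p₁ ^ α₁) p₂] at hdy
      exact (mul_dvd_mul_iff_left hp₂0.ne').mp this
    obtain ⟨a, _, hax⟩ := (Nat.dvd_prime_pow hp₁).mp hmx'
    obtain ⟨b, _, hby⟩ := (Nat.dvd_prime_pow hp₁).mp hmy'
    rcases le_total a b with h | h
    · exact key x y (by rw [hmx, hmy, hax, hby]; exact mul_dvd_mul_left _ (pow_dvd_pow _ h))
    · exact key' x y (by rw [hmx, hmy, hax, hby]; exact mul_dvd_mul_left _ (pow_dvd_pow _ h))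
end

section
/- Let G be a cyclic group of order n, and let S be a set of divisors of n, each greater than 1. Let C(S) be the set of elements of G whose order lies in S. Then C(S) is a clique in the difference graph of G if and only if S is an intersecting Sperner family in the divisor lattice of n, i.e., for all distinct s, t ∈ S, gcd(s, t) > 1, s ∤ t, and t ∤ s. -/
section Aux

lemma aux_nat_div {s t n : ℕ} (hs0 : s ≠ 0) (ht0 : t ≠ 0) (hst : s ∣ t) (htn : t ∣ n) :
    n / s = (n / t) * (t / s) := by
  obtain ⟨u, rfl⟩ := hst
  obtain ⟨v, rfl⟩ := htn
  have hs : 0 < s := Nat.pos_of_ne_zero hs0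
  have hsu : 0 < s * u := Nat.pos_of_ne_zero ht0
  have e1 : s * u * v / s = u * v := by rw [Nat.mul_assoc, Nat.mul_div_cancel_left _ hs]
  have e2 : s * u * v / (s * u) = v := Nat.mul_div_cancel_left v hsu
  have e3 : s * u / s = u := Nat.mul_div_cancel_left u hs
  rw [e1, e2, e3, Nat.mul_comm]

variable {G : Type*} [Group G] [Fintype G]

lemma aux_orderOf_pow_div (g : G) {d : ℕ} (hd : d ∣ orderOf g) (hd0 : d ≠ 0) :
    orderOf (g ^ (orderOf g / d)) = d := by
  have hg0 : orderOf g ≠ 0 := (orderOf_pos g).ne'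
  rw [orderOf_pow, Nat.gcd_eq_right (Nat.div_dvd_of_dvd hd), Nat.div_div_self hd hg0]

/-- In a finite cyclic group, every element lies in the subgroup generated by
`g ^ (orderOf g / orderOf z)` where `g` is a generator. -/
lemma aux_zpowers_eq (g : G) (hg : ∀ x : G, x ∈ Subgroup.zpowers g) (z : G) :
    Subgroup.zpowers z = Subgroup.zpowers (g ^ (orderOf g / orderOf z)) := by
  have hn0 : orderOf g ≠ 0 := (orderOf_pos g).ne'
  have hd0 : orderOf z ≠ 0 := (orderOf_pos z).ne'
  have hd : orderOf z ∣ orderOf g := by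
    have := orderOf_dvd_of_mem_zpowers (hg z)
    exact this
  set n := orderOf g
  set d := orderOf z
  have hord : orderOf (g ^ (n / d)) = d := aux_orderOf_pow_div g hd hd0
  have hmem : z ∈ Subgroup.zpowers (g ^ (n / d)) := by
    have hzp : z ∈ Submonoid.powers g := mem_powers_iff_mem_zpowers.mpr (hg z)
    obtain ⟨m, hm⟩ := hzp
    have hm' : g ^ m = z := hm
    have hz : g ^ (m * d) = 1 := by
      rw [pow_mul, hm', pow_orderOf_eq_one]
    have hnd : n ∣ m * d := orderOf_dvd_of_pow_eq_one hz
    have hdvd : n / d ∣ m := by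
      have hpos : 0 < d := Nat.pos_of_ne_zero hd0
      have : (n / d) * d ∣ m * d := by rwa [Nat.div_mul_cancel hd]
      exact (Nat.mul_dvd_mul_iff_right hpos).mp this
    refine mem_powers_iff_mem_zpowers.mp ⟨m / (n / d), ?_⟩
    show (g ^ (n / d)) ^ (m / (n / d)) = z
    rw [← pow_mul, Nat.mul_div_cancel' hdvd, hm']
  have hle : Subgroup.zpowers z ≤ Subgroup.zpowers (g ^ (n / d)) :=
    Subgroup.zpowers_le.mpr hmem
  refine Subgroup.eq_of_le_of_card_ge hle ?_
  rw [Nat.card_zpowers, Nat.card_zpowers, hord]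

/-- Key lemma: in a finite cyclic group, `orderOf x ∣ orderOf y → x ∈ zpowers y`. -/
lemma aux_mem_zpowers_of_dvd (hG : IsCyclic G) {x y : G}
    (h : orderOf x ∣ orderOf y) : x ∈ Subgroup.zpowers y := by
  obtain ⟨g, hg⟩ := hG.exists_generator
  have hs0 : orderOf x ≠ 0 := (orderOf_pos x).ne'
  have ht0 : orderOf y ≠ 0 := (orderOf_pos y).ne'
  set n := orderOf g
  set s := orderOf x
  set t := orderOf y
  have hsn : s ∣ n := orderOf_dvd_of_mem_zpowers (hg x)
  have htn : t ∣ n := orderOf_dvd_of_mem_zpowers (hg y)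
  have hx := aux_zpowers_eq g hg x
  have hy := aux_zpowers_eq g hg y
  have hmul : n / s = (n / t) * (t / s) := aux_nat_div hs0 ht0 h htn
  have hpow : g ^ (n / s) = (g ^ (n / t)) ^ (t / s) := by
    rw [hmul, pow_mul]
  have : x ∈ Subgroup.zpowers (g ^ (n / t)) := by
    have hx1 : x ∈ Subgroup.zpowers (g ^ (n / s)) := hx ▸ Subgroup.mem_zpowers x
    have hle : Subgroup.zpowers (g ^ (n / s)) ≤ Subgroup.zpowers (g ^ (n / t)) := by
      apply Subgroup.zpowers_le.mpr
      rw [hpow]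
      exact pow_mem (Subgroup.mem_zpowers _) _
    exact hle hx1
  rwa [← hy] at this

lemma aux_zpowers_eq_of_orderOf_eq (hG : IsCyclic G) {x y : G}
    (h : orderOf x = orderOf y) : Subgroup.zpowers x = Subgroup.zpowers y :=
  le_antisymm (Subgroup.zpowers_le.mpr (aux_mem_zpowers_of_dvd hG h.dvd))
    (Subgroup.zpowers_le.mpr (aux_mem_zpowers_of_dvd hG h.symm.dvd))

end Aux

theorem clique_iff_intersecting_sperner {G : Type*} [Group G] [Fintype G]
    (hG : IsCyclic G) (n : ℕ) (hn : Fintype.card G = n) (S : Finset ℕ)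
    (hdvd : ∀ s ∈ S, s ∣ n) (hgt : ∀ s ∈ S, 1 < s) :
    (∀ x y : G, orderOf x ∈ S → orderOf y ∈ S →
        Subgroup.zpowers x ≠ Subgroup.zpowers y → DiffAdj x y) ↔
      (∀ s ∈ S, ∀ t ∈ S, s ≠ t → 1 < Nat.gcd s t ∧ ¬ s ∣ t ∧ ¬ t ∣ s) := by
  obtain ⟨g, hg⟩ := hG.exists_generator
  have hgcard : orderOf g = n := by
    rw [orderOf_eq_card_of_forall_mem_zpowers hg, Nat.card_eq_fintype_card, hn]
  constructor
  · intro hcl s hs t ht hst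
    -- pick elements of order s and t
    have hs0 : s ≠ 0 := (Nat.zero_lt_of_lt (hgt s hs)).ne'
    have ht0 : t ≠ 0 := (Nat.zero_lt_of_lt (hgt t ht)).ne'
    set x := g ^ (n / s) with hxdef
    set y := g ^ (n / t) with hydef
    have hox : orderOf x = s := by
      rw [hxdef, ← hgcard]; exact aux_orderOf_pow_div g (hgcard ▸ hdvd s hs) hs0
    have hoy : orderOf y = t := by
      rw [hydef, ← hgcard]; exact aux_orderOf_pow_div g (hgcard ▸ hdvd t ht) ht0
    have hne : Subgroup.zpowers x ≠ Subgroup.zpowers y := by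
      intro h
      apply hst
      have := congrArg (fun H : Subgroup G => Nat.card H) h
      simp only [Nat.card_zpowers] at this
      rwa [hox, hoy] at this
    obtain ⟨-, -, -, hinf, hxy, hyx⟩ := hcl x y (hox ▸ hs) (hoy ▸ ht) hne
    refine ⟨?_, ?_, ?_⟩
    · -- gcd > 1 from nontrivial intersection
      obtain ⟨⟨z, hz⟩, hz1⟩ := Subgroup.ne_bot_iff_exists_ne_one.mp hinf
      have hzne : z ≠ 1 := by
        simpa [Subtype.ext_iff] using hz1
      obtain ⟨hzx, hzy⟩ := Subgroup.mem_inf.mp hz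
      have h1 : orderOf z ∣ s := hox ▸ orderOf_dvd_of_mem_zpowers hzx
      have h2 : orderOf z ∣ t := hoy ▸ orderOf_dvd_of_mem_zpowers hzy
      have hdg : orderOf z ∣ Nat.gcd s t := Nat.dvd_gcd h1 h2
      have hzo : 1 < orderOf z := by
        have h1 : orderOf z ≠ 1 := fun h => hzne (orderOf_eq_one_iff.mp h)
        have h0 : orderOf z ≠ 0 := (orderOf_pos z).ne'
        omega
      exact lt_of_lt_of_le hzo (Nat.le_of_dvd (Nat.gcd_pos_of_pos_left t
        (Nat.pos_of_ne_zero hs0)) hdg)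
    · intro h
      exact hxy (aux_mem_zpowers_of_dvd hG (by rw [hox, hoy]; exact h))
    · intro h
      exact hyx (aux_mem_zpowers_of_dvd hG (by rw [hox, hoy]; exact h))
  · intro hsp x y hx hy hne
    set s := orderOf x with hsdef
    set t := orderOf y with htdef
    have hst : s ≠ t := by
      intro h
      exact hne (aux_zpowers_eq_of_orderOf_eq hG h)
    obtain ⟨hgcd, hnst, hnts⟩ := hsp s hx t hy hst
    have hs1 : 1 < s := hgt s hx
    have ht1 : 1 < t := hgt t hy
    have hx1 : x ≠ 1 := by
      intro h
      rw [h, orderOf_one] at hsdef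
      omega
    have hy1 : y ≠ 1 := by
      intro h
      rw [h, orderOf_one] at htdef
      omega
    refine ⟨?_, hx1, hy1, ?_, ?_, ?_⟩
    · intro h; exact hne (by rw [h])
    · -- nontrivial intersection
      set d := Nat.gcd s t with hddef
      have hds : d ∣ s := Nat.gcd_dvd_left s t
      set z := x ^ (s / d) with hzdef
      have hoz : orderOf z = d := by
        rw [hzdef]
        have : orderOf x = s := hsdef.symm
        rw [orderOf_pow, this, Nat.gcd_eq_right (Nat.div_dvd_of_dvd hds),
          Nat.div_div_self hds (by omega)]
      have hzx : z ∈ Subgroup.zpowers x := pow_mem (Subgroup.mem_zpowers x) _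
      have hzy : z ∈ Subgroup.zpowers y := by
        apply aux_mem_zpowers_of_dvd hG
        rw [hoz, ← htdef]
        exact Nat.gcd_dvd_right s t
      apply Subgroup.ne_bot_iff_exists_ne_one.mpr
      refine ⟨⟨z, Subgroup.mem_inf.mpr ⟨hzx, hzy⟩⟩, ?_⟩
      simp only [ne_eq, Subtype.ext_iff, Subgroup.coe_one]
      intro h
      rw [h, orderOf_one] at hoz
      omega
    · intro h
      exact hnst (hsdef ▸ htdef ▸ orderOf_dvd_of_mem_zpowers h)
    · intro h
      exact hnts (htdef ▸ hsdef ▸ orderOf_dvd_of_mem_zpowers h)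
end
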